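/- Let (T,v) be a 1-pseudo-regular rooted tree and let A ⊂ V(T) be a non-empty finite set of vertices such that the induced subgraph G(A) is connected. Then |∂A|/|A| ≥ 1/3. -/

import Mathlib

open scoped ENNReal

namespace TreePaper

variable {V : Type*}

/-- The (outer) vertex boundary `∂A = {w : d(w,A) = 1}` of a set of vertices. -/
def vboundary (G : SimpleGraph V) (A : Set V) : Set V :=
  {w | w ∉ A ∧ ∃ a ∈ A, G.Adj w a}

/-- The ratio `|∂A| / |A|`, valued in `ℝ≥0∞`. -/
noncomputable def eratio (G : SimpleGraph V) (A : Finset V) : ℝ≥0∞ :=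
  ((vboundary G (A : Set V)).encard : ℝ≥0∞) / (A.card : ℝ≥0∞)

/-- `m` lies on the geodesic `[x y]`. -/
def Btw (G : SimpleGraph V) (x m y : V) : Prop :=
  G.dist x m + G.dist m y = G.dist x y

/-- `(T,v)` is `K`-pseudo-regular: for every `t` and every `a ∈ S(v,t)` there are two
distinct points `y₁ y₂ ∈ S(v,t+K) ∩ T^v_a`. -/
def KPseudoRegular (G : SimpleGraph V) (v : V) (K : ℕ) : Prop :=
  ∀ a : V, ∃ y₁ y₂ : V, y₁ ≠ y₂ ∧
    G.dist v y₁ = G.dist v a + K ∧ Btw G v a y₁ ∧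
    G.dist v y₂ = G.dist v a + K ∧ Btw G v a y₂

/-!
Every vertex of a `1`-pseudo-regular tree has two distinct children, and in a tree every vertex
is the child of at most one vertex. So the children of the vertices of a finite set `A` form a
set of `2 |A|` vertices, at least `|A|` of which lie outside `A`; being adjacent to their parents,
these lie in `∂A`. Hence `|∂A| ≥ |A|`.
-/

theorem _root_.Finset.card_le_card_biUnion_sdiff {α : Type*} [DecidableEq α] {A : Finset α}
    {s : α → Finset α} (hs : ∀ a ∈ A, 2 ≤ (s a).card) (hdisj : (A : Set α).PairwiseDisjoint s) :
    A.card ≤ (A.biUnion s \ A).card := by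
  have hcard : 2 * A.card ≤ (A.biUnion s).card := by
    rw [Finset.card_biUnion hdisj, mul_comm, ← smul_eq_mul, ← Finset.sum_const]
    exact Finset.sum_le_sum hs
  have := Finset.le_card_sdiff A (A.biUnion s)
  omega

theorem _root_.SimpleGraph.IsTree.eq_of_btw_of_dist_eq {G : SimpleGraph V} (hT : G.IsTree)
    {v a a' y : V} (h : Btw G v a y) (h' : Btw G v a' y) (hd : G.dist v a = G.dist v a') :
    a = a' := by
  obtain ⟨p, hp⟩ := hT.connected.exists_walk_length_eq_dist v a
  obtain ⟨q, hq⟩ := hT.connected.exists_walk_length_eq_dist a y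
  obtain ⟨p', hp'⟩ := hT.connected.exists_walk_length_eq_dist v a'
  obtain ⟨q', hq'⟩ := hT.connected.exists_walk_length_eq_dist a' y
  have hpath : (p.append q).IsPath :=
    (p.append q).isPath_of_length_eq_dist (by rw [SimpleGraph.Walk.length_append, hp, hq]; exact h)
  have hpath' : (p'.append q').IsPath :=
    (p'.append q').isPath_of_length_eq_dist
      (by rw [SimpleGraph.Walk.length_append, hp', hq']; exact h')
  have hgeod : p.append q = p'.append q' := (hT.existsUnique_path v y).unique hpath hpath'
  have ha : (p.append q).getVert (G.dist v a) = a := by simp [SimpleGraph.Walk.getVert_append, hp]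
  have ha' : (p'.append q').getVert (G.dist v a') = a' := by
    simp [SimpleGraph.Walk.getVert_append, hp']
  rw [← ha, ← ha', hgeod, hd]

def IsChild (G : SimpleGraph V) (v a c : V) : Prop :=
  Btw G v a c ∧ G.dist v c = G.dist v a + 1

theorem IsChild.adj {G : SimpleGraph V} {v a c : V} (h : IsChild G v a c) : G.Adj a c := by
  obtain ⟨hbtw, hd⟩ := h
  unfold Btw at hbtw
  exact SimpleGraph.dist_eq_one_iff_adj.1 (by omega)

theorem IsChild.parent_unique {G : SimpleGraph V} (hT : G.IsTree) {v a a' c : V}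
    (h : IsChild G v a c) (h' : IsChild G v a' c) : a = a' :=
  hT.eq_of_btw_of_dist_eq h.1 h'.1 (by have := h.2; have := h'.2; omega)

theorem KPseudoRegular.exists_two_children {G : SimpleGraph V} {v : V}
    (hpr : KPseudoRegular G v 1) (a : V) :
    ∃ c₁ c₂, c₁ ≠ c₂ ∧ IsChild G v a c₁ ∧ IsChild G v a c₂ := by
  obtain ⟨c₁, c₂, hne, hd₁, hb₁, hd₂, hb₂⟩ := hpr a
  exact ⟨c₁, c₂, hne, ⟨hb₁, hd₁⟩, ⟨hb₂, hd₂⟩⟩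

theorem card_le_encard_vboundary {G : SimpleGraph V} {v : V} (hT : G.IsTree)
    (hpr : KPseudoRegular G v 1) (A : Finset V) :
    (A.card : ℕ∞) ≤ (vboundary G A).encard := by
  classical
  choose c₁ c₂ hne hc₁ hc₂ using hpr.exists_two_children
  set s : V → Finset V := fun a => {c₁ a, c₂ a}
  have hchild : ∀ a, ∀ c ∈ s a, IsChild G v a c := by
    intro a c hc
    simp only [s, Finset.mem_insert, Finset.mem_singleton] at hc
    rcases hc with rfl | rfl
    exacts [hc₁ a, hc₂ a]
  have hdisj : (A : Set V).PairwiseDisjoint s := fun a _ a' _ hne =>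
    Finset.disjoint_left.2 fun c hc hc' => hne ((hchild a c hc).parent_unique hT (hchild a' c hc'))
  have hsub : ((A.biUnion s \ A : Finset V) : Set V) ⊆ vboundary G A := by
    intro c hc
    obtain ⟨hcs, hcA⟩ := Finset.mem_sdiff.1 hc
    obtain ⟨a, haA, hca⟩ := Finset.mem_biUnion.1 hcs
    exact ⟨hcA, a, haA, (hchild a c hca).adj.symm⟩
  calc (A.card : ℕ∞) ≤ (A.biUnion s \ A).card := by
        exact_mod_cast Finset.card_le_card_biUnion_sdiff
          (fun a _ => (Finset.card_pair (hne a)).ge) hdisj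
    _ = ((A.biUnion s \ A : Finset V) : Set V).encard := (Set.encard_coe_eq_coe_finsetCard _).symm
    _ ≤ (vboundary G A).encard := Set.encard_mono hsub

theorem one_le_eratio {G : SimpleGraph V} {A : Finset V} (hA : A.Nonempty)
    (h : (A.card : ℕ∞) ≤ (vboundary G A).encard) : 1 ≤ eratio G A := by
  have hcard : (A.card : ℝ≥0∞) ≠ 0 := by exact_mod_cast hA.card_pos.ne'
  rw [eratio, ENNReal.le_div_iff_mul_le (Or.inl hcard) (Or.inl (ENNReal.natCast_ne_top _)),
    one_mul]
  exact_mod_cast h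

theorem eratio_ge_third_of_onePseudoRegular (G : SimpleGraph V) (v : V) (hT : G.IsTree)
    (hpr : KPseudoRegular G v 1)
    (A : Finset V) (hA : A.Nonempty) :
    (1 : ℝ≥0∞) / 3 ≤ eratio G A :=
  calc (1 : ℝ≥0∞) / 3 ≤ 1 := ENNReal.div_le_of_le_mul (by norm_num)
    _ ≤ eratio G A := one_le_eratio hA (card_le_encard_vboundary hT hpr A)

end TreePaper
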